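/- Let f : ℝ^d → ℝ be differentiable such that for all x, x' and λ ∈ [0,1], |f(λx + (1−λ)x') − (λ f(x) + (1−λ) f(x'))| ≤ (λ(1−λ)κ/2)‖x − x'‖². Then for all x, x', |⟨∇f(x) − ∇f(x'), x − x'⟩| ≤ κ‖x − x'‖². -/

import Mathlib

open scoped RealInnerProductSpace

lemma deriv_bound_at_zero {h : ℝ → ℝ} {D M : ℝ} (hd : HasDerivAt h D 0)
    (h0 : h 0 = 0) (hb : ∀ t ∈ Set.Ioc (0:ℝ) 1, |h t| ≤ M * t) : |D| ≤ M := by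
  have hslope : Filter.Tendsto (slope h 0) (nhdsWithin 0 {(0:ℝ)}ᶜ) (nhds D) :=
    hasDerivAt_iff_tendsto_slope.mp hd
  have hslope' : Filter.Tendsto (fun t => |slope h 0 t|) (nhdsWithin 0 (Set.Ioi 0)) (nhds |D|) :=
    ((hslope.mono_left (nhdsWithin_mono _ (fun t ht => ne_of_gt ht))).abs)
  refine le_of_tendsto hslope' ?_
  filter_upwards [Ioc_mem_nhdsGT_of_mem (Set.left_mem_Ico.mpr one_pos)] with t ht
  have ht0 : 0 < t := ht.1
  have : slope h 0 t = h t / t := by simp [slope_def_field, h0]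
  rw [this, abs_div, abs_of_pos ht0, div_le_iff₀ ht0]
  exact hb t ht

theorem mixup_bound_converse (d : ℕ) (f : EuclideanSpace ℝ (Fin d) → ℝ)
    (κ : ℝ) (hκ : 0 ≤ κ) (hdiff : Differentiable ℝ f)
    (hbound : ∀ (x x' : EuclideanSpace ℝ (Fin d)), ∀ lam ∈ Set.Icc (0:ℝ) 1,
      |f (lam • x + (1 - lam) • x') - (lam * f x + (1 - lam) * f x')| ≤
        lam * (1 - lam) * κ / 2 * ‖x - x'‖ ^ 2)
    (x x' : EuclideanSpace ℝ (Fin d)) :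
    |⟪gradient f x - gradient f x', x - x'⟫| ≤ κ * ‖x - x'‖ ^ 2 := by
  set v := x - x' with hv
  set C := ‖x - x'‖ ^ 2 with hC
  have hC0 : 0 ≤ C := by positivity
  have hcurve : ∀ lam : ℝ, x' + lam • v = lam • x + (1 - lam) • x' := by
    intro lam; rw [hv]; module
  -- g
  set g : ℝ → ℝ := fun lam => f (x' + lam • v) with hg
  have hg' : ∀ lam : ℝ, HasDerivAt g ⟪gradient f (x' + lam • v), v⟫ lam := by
    intro lam
    have hc : HasDerivAt (fun lam : ℝ => x' + lam • v) v lam := by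
      simpa using ((hasDerivAt_id lam).smul_const v).const_add x'
    have hF := ((hdiff (x' + lam • v)).hasGradientAt).hasFDerivAt
    have := hF.comp_hasDerivAt lam hc
    simp at this ⊢; exact this
  -- h
  set h : ℝ → ℝ := fun lam => g lam - (lam * f x + (1 - lam) * f x') with hh
  have hh' : ∀ lam : ℝ,
      HasDerivAt h (⟪gradient f (x' + lam • v), v⟫ - (f x - f x')) lam := by
    intro lam
    have hl : HasDerivAt (fun lam : ℝ => lam * f x + (1 - lam) * f x') (f x - f x') lam := by
      have h1 : HasDerivAt (fun lam : ℝ => lam * f x) (f x) lam := by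
        simpa using (hasDerivAt_id lam).mul_const (f x)
      have h2 : HasDerivAt (fun lam : ℝ => (1 - lam) * f x') (-f x') lam := by
        have := (((hasDerivAt_id lam).const_sub 1).mul_const (f x'))
        simpa using this
      have := h1.add h2
      simp [sub_eq_add_neg] at this ⊢; exact this
    exact (hg' lam).sub hl
  have hbnd : ∀ t ∈ Set.Icc (0:ℝ) 1, |h t| ≤ t * (1 - t) * κ / 2 * C := by
    intro t ht
    have := hbound x x' t ht
    simpa [hh, hg, hcurve t, hC] using this
  have hx0 : x' + (0:ℝ) • v = x' := by simp
  have hx1 : x' + (1:ℝ) • v = x := by rw [hv]; module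
  -- bound at 0
  have hb0 : |⟪gradient f x', v⟫ - (f x - f x')| ≤ κ / 2 * C := by
    have hd0 := hh' 0
    rw [hx0] at hd0
    refine deriv_bound_at_zero hd0 (by simp [hh, hg]) ?_
    intro t ht
    calc |h t| ≤ t * (1 - t) * κ / 2 * C := hbnd t ⟨le_of_lt ht.1, ht.2⟩
      _ ≤ κ / 2 * C * t := by nlinarith [mul_nonneg (mul_nonneg (mul_nonneg hκ hC0) ht.1.le) ht.1.le]
  -- bound at 1
  have hb1 : |⟪gradient f x, v⟫ - (f x - f x')| ≤ κ / 2 * C := by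
    have hd1 := hh' 1
    rw [hx1] at hd1
    have hv1 : x' + v = x := by simpa using hx1
    have hcomp : HasDerivAt (fun t : ℝ => h (1 - t))
        (-(⟪gradient f x, v⟫ - (f x - f x'))) 0 := by
      have hlin : HasDerivAt (fun t : ℝ => 1 - t) (-1 : ℝ) 0 := by
        have := (hasDerivAt_const (0:ℝ) (1:ℝ)).sub (hasDerivAt_id (0:ℝ))
        simp at this ⊢; exact this
      have hpt : ((fun t : ℝ => 1 - t) 0) = 1 := by norm_num
      have hd1' : HasDerivAt h (⟪gradient f x, v⟫ - (f x - f x')) ((fun t : ℝ => 1 - t) 0) :=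
        hpt.symm ▸ hd1
      have := hd1'.comp 0 hlin
      simp [Function.comp, mul_comm] at this ⊢; exact this
    have := deriv_bound_at_zero (M := κ / 2 * C) hcomp (by simp [hh, hg, hv1]) ?_
    · rwa [abs_neg] at this
    · intro t ht
      calc |h (1 - t)| ≤ (1 - t) * (1 - (1 - t)) * κ / 2 * C := by
            refine hbnd (1 - t) ⟨by linarith [ht.2], by linarith [ht.1]⟩
        _ ≤ κ / 2 * C * t := by nlinarith [mul_nonneg (mul_nonneg (mul_nonneg hκ hC0) ht.1.le) ht.1.le, mul_nonneg (mul_nonneg hκ hC0) ht.1.le, ht.2]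
  -- combine
  have key : ⟪gradient f x - gradient f x', v⟫ =
      (⟪gradient f x, v⟫ - (f x - f x')) - (⟪gradient f x', v⟫ - (f x - f x')) := by
    rw [inner_sub_left]; ring
  rw [hv] at key ⊢
  rw [key]
  calc |(⟪gradient f x, x - x'⟫ - (f x - f x')) - (⟪gradient f x', x - x'⟫ - (f x - f x'))|
      ≤ |⟪gradient f x, x - x'⟫ - (f x - f x')| + |⟪gradient f x', x - x'⟫ - (f x - f x')| :=
        abs_sub _ _
    _ ≤ κ / 2 * C + κ / 2 * C := add_le_add (by simpa [hv] using hb1) (by simpa [hv] using hb0)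
    _ = κ * ‖x - x'‖ ^ 2 := by rw [hC]; ring
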